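/- Let F be a properly parametrized Markov multi-map with forward trajectory space X and associated SFT Σ_M, and let E={a∈Σ_M: aᵢ∈A^(e) for all i≥0} be the set of essential symbolic sequences. Then for every x∈X there exists a∈E such that (x_i,x_{i+1})∈G(a_i) for all i≥0. -/

import Mathlib

open Set Topology

/-! ### Generic dynamical notions -/

/-- Topological transitivity of a map. -/
def TopTransitive {α : Type*} [TopologicalSpace α] (T : α → α) : Prop :=
  ∀ U V : Set α, IsOpen U → IsOpen V → U.Nonempty → V.Nonempty →
    ∃ n : ℕ, (T^[n] '' U ∩ V).Nonempty

/-- Topological mixing of a map. -/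
def TopMixing {α : Type*} [TopologicalSpace α] (T : α → α) : Prop :=
  ∀ U V : Set α, IsOpen U → IsOpen V → U.Nonempty → V.Nonempty →
    ∃ N : ℕ, ∀ n, N ≤ n → (T^[n] '' U ∩ V).Nonempty

/-- Density of the set of periodic points of a map. -/
def DensePeriodic {α : Type*} [TopologicalSpace α] (T : α → α) : Prop :=
  Dense {x : α | ∃ p : ℕ, 1 ≤ p ∧ T^[p] x = x}

/-- The metric `d(x,y) = sup_k |x_k - y_k|/(k+1)` on sequence spaces. -/
noncomputable def dseq (x y : ℕ → ℝ) : ℝ := ⨆ k : ℕ, |x k - y k| / ((k : ℝ) + 1)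

/-- The specification property for a map `T` with respect to a distance function `d`. -/
def SpecProp {α : Type*} (T : α → α) (d : α → α → ℝ) : Prop :=
  ∀ ε : ℝ, 0 < ε → ∃ N : ℕ, ∀ l : ℕ, ∀ x : Fin (l + 1) → α, ∀ a b : Fin (l + 1) → ℕ,
    (∀ k, 1 ≤ a k) → (∀ k, a k ≤ b k) →
    (∀ k : Fin l, b k.castSucc < a k.succ ∧ b k.castSucc + N ≤ a k.succ) →
    ∀ p : ℕ, b (Fin.last l) + N ≤ p →
      ∃ z : α, T^[p] z = z ∧
        ∀ k : Fin (l + 1), ∀ i : ℕ, a k ≤ i → i ≤ b k → d (T^[i] z) (T^[i] (x k)) < ε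

/-- The length `ℓ` of a (possibly degenerate) interval. -/
noncomputable def intervalLen (I : Set ℝ) : ℝ := sSup I - sInf I

/-! ### Markov multi-maps -/

/-- A Markov multi-map of the interval, given by a tuple
`(P, A₀, A₁, A₂, D, R, {f_a})` as in the paper, together with the derived data
(inverse maps `g`, interiors `D0`, `R0`, graphs `Gr`, `G0`) which are uniquely
determined by the defining equations below. -/
structure MarkovMultiMap where
  A : Type
  finA : Finite A
  A0 : Set A
  A1 : Set A
  A2 : Set A
  P : Finset ℝ
  D : A → Set ℝ
  R : A → Set ℝ
  f : A → ℝ → ℝ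
  g : A → ℝ → ℝ
  D0 : A → Set ℝ
  R0 : A → Set ℝ
  Gr : A → Set (ℝ × ℝ)
  G0 : A → Set (ℝ × ℝ)
  P_zero : (0 : ℝ) ∈ P
  P_one : (1 : ℝ) ∈ P
  P_sub : (P : Set ℝ) ⊆ Set.Icc 0 1
  A_cover : ∀ a : A, a ∈ A0 ∨ a ∈ A1 ∨ a ∈ A2
  A01 : A0 ∩ A1 = ∅
  A02 : A0 ∩ A2 = ∅
  A12 : A1 ∩ A2 = ∅
  D_A0 : ∀ a ∈ A0, ∃ p ∈ P, ∃ q ∈ P, p < q ∧ (∀ r ∈ P, ¬(p < r ∧ r < q)) ∧ D a = Set.Icc p q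
  D_A12 : ∀ a ∈ A1 ∪ A2, ∃ p ∈ P, D a = {p}
  R_A0 : ∀ a ∈ A0, ∃ u ∈ P, ∃ v ∈ P, u < v ∧ R a = Set.Icc u v
  R_A1 : ∀ a ∈ A1, ∃ u ∈ P, ∃ v ∈ P, u < v ∧ R a = Set.Icc u v ∧
    Set.Icc u v ∩ (P : Set ℝ) = {u, v}
  R_A2 : ∀ a ∈ A2, ∃ u ∈ P, R a = {u}
  f_homeo : ∀ a ∈ A0, ContinuousOn (f a) (D a) ∧ Set.BijOn (f a) (D a) (R a)
  g_A0 : ∀ a ∈ A0, (∀ x ∈ D a, g a (f a x) = x) ∧ ∀ y ∈ R a, g a y ∈ D a ∧ f a (g a y) = y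
  g_A12 : ∀ a ∈ A1 ∪ A2, ∀ y ∈ R a, g a y ∈ D a
  cover : Set.Icc (0 : ℝ) 1 = ⋃ a : A, D a
  D0_A0 : ∀ a ∈ A0, D0 a = interior (D a)
  D0_A12 : ∀ a ∈ A1 ∪ A2, D0 a = D a
  R0_A01 : ∀ a ∈ A0 ∪ A1, R0 a = interior (R a)
  R0_A2 : ∀ a ∈ A2, R0 a = R a
  Gr_A0 : ∀ a ∈ A0, Gr a = {q : ℝ × ℝ | q.1 ∈ D a ∧ q.2 = f a q.1}
  Gr_A12 : ∀ a ∈ A1 ∪ A2, Gr a = (D a) ×ˢ (R a)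
  G0_A0 : ∀ a ∈ A0, G0 a = {q : ℝ × ℝ | q.1 ∈ D0 a ∧ q.2 = f a q.1}
  G0_A1 : ∀ a ∈ A1, G0 a = (D a) ×ˢ (R0 a)
  G0_A2 : ∀ a ∈ A2, G0 a = Gr a

namespace MarkovMultiMap

variable (M : MarkovMultiMap)

/-- The graph `G(F)` of the multi-map. -/
def GF : Set (ℝ × ℝ) := ⋃ a : M.A, M.Gr a

/-- `F` is properly parametrized: the sets `G₀(a)` partition `G(F)`. -/
def ProperlyParametrized : Prop :=
  (⋃ a : M.A, M.G0 a) = M.GF ∧ ∀ a b : M.A, a ≠ b → Disjoint (M.G0 a) (M.G0 b)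

/-- The forward trajectory space `X`. -/
def X : Set (ℕ → ℝ) :=
  {x | (∀ k, x k ∈ Set.Icc (0 : ℝ) 1) ∧ ∀ k, (x k, x (k + 1)) ∈ M.GF}

/-- The left-shift map `T` on the forward trajectory space. -/
def shift : M.X → M.X :=
  fun x => ⟨fun k => x.1 (k + 1), ⟨fun k => x.2.1 (k + 1), fun k => x.2.2 (k + 1)⟩⟩

/-- The inverse trajectory (inverse limit) space `Y`, encoded by `y k = y_{-k}`. -/
def Y : Set (ℕ → ℝ) :=
  {y | (∀ k, y k ∈ Set.Icc (0 : ℝ) 1) ∧ ∀ k, (y (k + 1), y k) ∈ M.GF}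

/-- The right-shift map `S` on the inverse limit space (in the encoding `y k = y_{-k}`). -/
def ishift : M.Y → M.Y :=
  fun y => ⟨fun k => y.1 (k + 1), ⟨fun k => y.2.1 (k + 1), fun k => y.2.2 (k + 1)⟩⟩

/-- The space `X_n` of finite trajectories of length `n`. -/
def finTraj (n : ℕ) : Set (Fin n → ℝ) :=
  {x | (∀ i, x i ∈ Set.Icc (0 : ℝ) 1) ∧
    ∀ i : Fin n, ∀ h : (i : ℕ) + 1 < n, (x i, x ⟨(i : ℕ) + 1, h⟩) ∈ M.GF}

/-- The associated nearest-neighbor SFT `Σ_M`. -/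
def SFT : Set (ℕ → M.A) := {a | ∀ n : ℕ, M.D0 (a (n + 1)) ⊆ M.R0 (a n)}

/-- The word `u` (of length `n`) occurs in some point of `Z`. -/
def WordIn {n : ℕ} (u : Fin n → M.A) (Z : Set (ℕ → M.A)) : Prop :=
  ∃ z ∈ Z, ∃ m : ℕ, ∀ i : Fin n, u i = z (m + (i : ℕ))

/-- `L_n`, the words of length `n` in the language of `Σ_M`. -/
def Lang (n : ℕ) : Set (Fin n → M.A) := {u | M.WordIn u M.SFT}

/-- `(x,u)` is a labeled finite trajectory: `(x_k, x_{k+1}) ∈ G(u_k)` for all `k`. -/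
def Labeled {n : ℕ} (x : Fin (n + 1) → ℝ) (u : Fin n → M.A) : Prop :=
  ∀ i : Fin n, (x i.castSucc, x i.succ) ∈ M.Gr (u i)

/-- `(x,u)` is a special labeled finite trajectory: `(x_k, x_{k+1}) ∈ G₀(u_k)` for all `k`. -/
def SpecialLabeled {n : ℕ} (x : Fin (n + 1) → ℝ) (u : Fin n → M.A) : Prop :=
  ∀ i : Fin n, (x i.castSucc, x i.succ) ∈ M.G0 (u i)

/-- A word `u ∈ L_n` is essential if the set of finite trajectories specially labeled
by `u` is open in `X_{n+1}`. -/
def EssentialWord {n : ℕ} (u : Fin n → M.A) : Prop :=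
  u ∈ M.Lang n ∧ IsOpen {x : M.finTraj (n + 1) | M.SpecialLabeled x.1 u}

/-- A symbol is essential if it appears in some essential word. -/
def EssentialSymbol (a : M.A) : Prop :=
  ∃ n : ℕ, ∃ u : Fin n → M.A, M.EssentialWord u ∧ ∃ i : Fin n, u i = a

/-- `A^(e)`, the set of essential symbols. -/
def Ess : Set M.A := {a | M.EssentialSymbol a}

/-- `E`, the set of essential symbolic sequences. -/
def E : Set (ℕ → M.A) := {z ∈ M.SFT | ∀ i : ℕ, z i ∈ M.Ess}

/-- A word all of whose letters lie in `C`, in the language of `Σ_M`. -/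
def WordOver {n : ℕ} (u : Fin n → M.A) (C : Set M.A) : Prop :=
  u ∈ M.Lang n ∧ ∀ i, u i ∈ C

/-- There is a word of length `n+1` over `C` beginning with `a` and ending with `b`. -/
def WordFromTo (C : Set M.A) (a b : M.A) (n : ℕ) : Prop :=
  ∃ u : Fin (n + 1) → M.A, M.WordOver u C ∧ u 0 = a ∧ u (Fin.last n) = b

/-- `C ⊆ A` is irreducible. -/
def IrreducibleSet (C : Set M.A) : Prop :=
  ∀ a ∈ C, ∀ b ∈ C, ∃ n : ℕ, M.WordFromTo C a b n

/-- `C` is an irreducible component (a maximal irreducible subset of `A`). -/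
def IrreducibleComponent (C : Set M.A) : Prop :=
  M.IrreducibleSet C ∧ ∀ C' : Set M.A, M.IrreducibleSet C' → C ⊆ C' → C' = C

/-- `C ⊆ A` is mixing. -/
def MixingSet (C : Set M.A) : Prop :=
  ∃ N : ℕ, 1 ≤ N ∧ ∀ a ∈ C, ∀ b ∈ C, ∀ n : ℕ, N ≤ n + 1 → M.WordFromTo C a b n

/-- `C` is a mixing component (a maximal mixing subset of `A`). -/
def MixingComponent (C : Set M.A) : Prop :=
  M.MixingSet C ∧ ∀ C' : Set M.A, M.MixingSet C' → C ⊆ C' → C' = C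

/-- The Irreducibility Condition (IC). -/
def IC : Prop := ∃ C : Set M.A, M.IrreducibleComponent C ∧ M.Ess ⊆ C

/-- The Mixing Condition (MC). -/
def MC : Prop := ∃ C : Set M.A, M.MixingComponent C ∧ M.Ess ⊆ C

/-- `Z` is a subshift of `Σ_M`: shift-invariant and closed in the product of discrete
topologies (closedness phrased combinatorially). -/
def IsSubshift (Z : Set (ℕ → M.A)) : Prop :=
  Z ⊆ M.SFT ∧ (∀ z ∈ Z, (fun k => z (k + 1)) ∈ Z) ∧
  ∀ x : ℕ → M.A, (∀ n : ℕ, ∃ z ∈ Z, ∀ i, i < n → z i = x i) → x ∈ Z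

/-- The symbol `a` occurs in some point of `Z`. -/
def SymbolInShift (Z : Set (ℕ → M.A)) (a : M.A) : Prop := ∃ z ∈ Z, ∃ k : ℕ, z k = a

/-- `Z` is transitive on symbols. -/
def TransitiveOnSymbols (Z : Set (ℕ → M.A)) : Prop :=
  ∀ a b : M.A, M.SymbolInShift Z a → M.SymbolInShift Z b →
    ∃ z ∈ Z, ∃ m n : ℕ, z m = a ∧ z (m + n) = b

end MarkovMultiMap

/-- The composition `g_{u₀} ∘ ⋯ ∘ g_{u_n}` of inverse maps along a list of symbols. -/
def gWordList (M : MarkovMultiMap) : List M.A → ℝ → ℝ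
  | [], x => x
  | a :: l, x => M.g a (gWordList M l x)

namespace MarkovMultiMap

/-- The inverse map `g_u` associated to a word `u = u₀⋯u_n`. -/
def gWord (M : MarkovMultiMap) {n : ℕ} (u : Fin (n + 1) → M.A) : ℝ → ℝ :=
  gWordList M (List.ofFn u)

/-- The interval `I_u = g_u(R(u_n))`. -/
def Iword (M : MarkovMultiMap) {n : ℕ} (u : Fin (n + 1) → M.A) : Set ℝ :=
  M.gWord u '' M.R (u (Fin.last n))

/-- The Coding Condition (CC). -/
def CC (M : MarkovMultiMap) : Prop :=
  ∃ Z : Set (ℕ → M.A), M.IsSubshift Z ∧ M.TransitiveOnSymbols Z ∧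
    (∀ y ∈ Set.Icc (0 : ℝ) 1, ∃ a ∈ Z, ∃ x ∈ M.X, x 0 = y ∧
      ∀ i : ℕ, (x i, x (i + 1)) ∈ M.Gr (a i)) ∧
    (∀ ε : ℝ, 0 < ε → ∃ N : ℕ, ∀ n : ℕ, N ≤ n → ∀ u : Fin (n + 1) → M.A,
      M.WordIn u Z → intervalLen (M.Iword u) < ε)

/-- Uniform equicontinuity of the family `{g_u : u ∈ L(C)}`. -/
def UnifEquicontOn (M : MarkovMultiMap) (C : Set M.A) : Prop :=
  ∀ ε : ℝ, 0 < ε → ∃ δ : ℝ, 0 < δ ∧ ∀ n : ℕ, ∀ u : Fin (n + 1) → M.A, M.WordOver u C →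
    ∀ x ∈ M.R (u (Fin.last n)), ∀ y ∈ M.R (u (Fin.last n)),
      |x - y| < δ → |M.gWord u x - M.gWord u y| < ε

end MarkovMultiMap

/-!
Since `F` is properly parametrized, every finite trajectory `y` has a unique special label `w`,
and `w` lies in the language of `Σ_M` because `y` extends to an infinite trajectory. The graphs
`G(a)` are finitely many closed sets, so near a pair `q` every point of `G(F)` lies only in graphs
through `q`; when `q ∈ G₀(a)` has a coordinate outside `P`, this forces the nearby points of
`G(F)` into `G₀(a)`. The remaining letters lie in `A₂` and their pairs are points of `P × P`; an
`A₂`-letter is followed by a letter whose domain is a single point, and within each `G(a)` the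
second coordinate determines the first, so these pairs are pinned from right to left. Hence `w` is
essential unless it ends with an `A₂`-letter. In that case `y` is the only trajectory labelled by
`w`: either `y` is isolated and `w` is again essential, or `y` is a limit of trajectories `y' ≠ y`
whose last point leaves `P`; their special labels are essential and, the graphs being closed, also
label `y`. Compactness of `A^ℕ` assembles these labels of longer and longer initial segments of a
trajectory into a point of `E`.
-/

open Filter

theorem ContinuousOn.mapsTo_Ioo_of_bijOn_Icc {α δ : Type*} [ConditionallyCompleteLinearOrder α]
    [TopologicalSpace α] [OrderTopology α] [DenselyOrdered α] [LinearOrder δ] [TopologicalSpace δ]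
    [OrderClosedTopology δ] {f : α → δ} {a b : α} {c d : δ} (hab : a ≤ b)
    (hf : ContinuousOn f (Icc a b)) (hbij : BijOn f (Icc a b) (Icc c d)) :
    MapsTo f (Ioo a b) (Ioo c d) ∧ MapsTo f {a, b} {c, d} := by
  have ha := hbij.mapsTo (left_mem_Icc.2 hab)
  have hb := hbij.mapsTo (right_mem_Icc.2 hab)
  have hcd : c ≤ d := ha.1.trans ha.2
  obtain ⟨s, hs, hfs⟩ := hbij.surjOn (left_mem_Icc.2 hcd)
  obtain ⟨t, ht, hft⟩ := hbij.surjOn (right_mem_Icc.2 hcd)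
  rcases hf.strictMonoOn_of_injOn_Icc' hab hbij.injOn with hmono | hanti
  · have hfa : f a = c := le_antisymm (hfs ▸ hmono.monotoneOn (left_mem_Icc.2 hab) hs hs.1) ha.1
    have hfb : f b = d := le_antisymm hb.2 (hft ▸ hmono.monotoneOn ht (right_mem_Icc.2 hab) ht.2)
    refine ⟨hfa ▸ hfb ▸ hmono.mapsTo_Ioo, ?_⟩
    rintro x (rfl | rfl) <;> simp [hfa, hfb]
  · have hfa : f a = d := le_antisymm ha.2 (hft ▸ hanti.antitoneOn (left_mem_Icc.2 hab) ht ht.1)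
    have hfb : f b = c := le_antisymm (hfs ▸ hanti.antitoneOn hs (right_mem_Icc.2 hab) hs.2) hb.1
    refine ⟨hfa ▸ hfb ▸ hanti.mapsTo_Ioo, ?_⟩
    rintro x (rfl | rfl) <;> simp [hfa, hfb]

theorem exists_forall_exists_eqOn_of_finite {α : Type*} [Finite α] (u : ℕ → ℕ → α) :
    ∃ a : ℕ → α, ∀ n, ∃ m, n ≤ m ∧ ∀ i < n, a i = u m i := by
  let _ : TopologicalSpace α := ⊥
  have : DiscreteTopology α := ⟨rfl⟩
  obtain ⟨a, ha⟩ := exists_clusterPt_of_compactSpace (map u atTop)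
  refine ⟨a, fun n => ?_⟩
  have hnhds : ∀ᶠ w in 𝓝 a, ∀ i ∈ Iio n, w i = a i :=
    (finite_Iio n).eventually_all.2 fun i _ =>
      ((continuous_apply i).tendsto a).eventually_mem ((isOpen_discrete {a i}).mem_nhds rfl)
  obtain ⟨m, hnm, hm⟩ := (MapClusterPt.frequently ha hnhds).forall_exists_of_atTop n
  exact ⟨m, hnm, fun i hi => (hm i hi).symm⟩

theorem eventually_forall_pairs {X : Type*} [TopologicalSpace X] {n : ℕ} {y : Fin (n + 1) → X}
    {Q : Fin n → X × X → Prop} (h : ∀ i, ∀ᶠ q in 𝓝 (y i.castSucc, y i.succ), Q i q) :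
    ∀ᶠ y' in 𝓝 y, ∀ i, Q i (y' i.castSucc, y' i.succ) :=
  eventually_all.2 fun i =>
    (((continuous_apply _).prodMk (continuous_apply _)).tendsto y).eventually (h i)

theorem mem_Ioo_of_mem_Icc_of_notMem {α : Type*} [PartialOrder α] {s : Set α} {a b t : α}
    (ha : a ∈ s) (hb : b ∈ s) (ht : t ∈ Icc a b) (hts : t ∉ s) : t ∈ Ioo a b :=
  ⟨ht.1.lt_of_ne (by rintro rfl; exact hts ha), ht.2.lt_of_ne (by rintro rfl; exact hts hb)⟩

namespace MarkovMultiMap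

variable {M : MarkovMultiMap} {a b : M.A}

lemma notMem_A2_of_mem_A0 (ha : a ∈ M.A0) : a ∉ M.A2 :=
  fun h => (M.A02.subset ⟨ha, h⟩ : _)

lemma D_eq_Icc (ha : a ∈ M.A0) : ∃ p q, p ∈ M.P ∧ q ∈ M.P ∧ p < q ∧
    (∀ r ∈ M.P, r ∉ Ioo p q) ∧ M.D a = Icc p q ∧ M.D0 a = Ioo p q := by
  obtain ⟨p, hp, q, hq, hpq, hadj, hD⟩ := M.D_A0 a ha
  exact ⟨p, q, hp, hq, hpq, fun r hr h => hadj r hr h, hD, by rw [M.D0_A0 a ha, hD, interior_Icc]⟩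

lemma D_eq_singleton (ha : a ∉ M.A0) : ∃ p ∈ M.P, M.D a = {p} ∧ M.D0 a = {p} := by
  have ha : a ∈ M.A1 ∪ M.A2 := (M.A_cover a).resolve_left ha
  obtain ⟨p, hp, hD⟩ := M.D_A12 a ha
  exact ⟨p, hp, hD, by rw [M.D0_A12 a ha, hD]⟩

lemma R_eq_Icc (ha : a ∉ M.A2) : ∃ u v, u ∈ M.P ∧ v ∈ M.P ∧ u < v ∧
    M.R a = Icc u v ∧ M.R0 a = Ioo u v := by
  have ha : a ∈ M.A0 ∪ M.A1 := (M.A_cover a).imp_right (·.resolve_right ha)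
  obtain ⟨u, hu, v, hv, huv, hR⟩ : ∃ u ∈ M.P, ∃ v ∈ M.P, u < v ∧ M.R a = Icc u v := by
    rcases ha with h | h
    · exact M.R_A0 a h
    · obtain ⟨u, hu, v, hv, huv, hR, -⟩ := M.R_A1 a h
      exact ⟨u, hu, v, hv, huv, hR⟩
  exact ⟨u, v, hu, hv, huv, hR, by rw [M.R0_A01 a ha, hR, interior_Icc]⟩

lemma R_eq_singleton (ha : a ∈ M.A2) : ∃ w ∈ M.P, M.R a = {w} ∧ M.R0 a = {w} := by
  obtain ⟨w, hw, hR⟩ := M.R_A2 a ha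
  exact ⟨w, hw, hR, by rw [M.R0_A2 a ha, hR]⟩

lemma notMem_P_of_mem_D0 (ha : a ∈ M.A0) {t : ℝ} (ht : t ∈ M.D0 a) : t ∉ M.P := by
  obtain ⟨p, q, -, -, -, hadj, -, hD0⟩ := D_eq_Icc ha
  exact fun htP => hadj t htP (hD0 ▸ ht)

lemma notMem_P_of_mem_R0_of_mem_A1 (ha : a ∈ M.A1) {t : ℝ} (ht : t ∈ M.R0 a) : t ∉ M.P := by
  obtain ⟨u, hu, v, hv, -, hR, hRP⟩ := M.R_A1 a ha
  rw [M.R0_A01 a (Or.inr ha), hR, interior_Icc] at ht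
  intro htP
  have : t ∈ ({u, v} : Set ℝ) := hRP ▸ ⟨Ioo_subset_Icc_self ht, htP⟩
  rcases this with rfl | rfl
  exacts [lt_irrefl _ ht.1, lt_irrefl _ ht.2]

lemma mem_D0_of_mem_D {t : ℝ} (ht : t ∈ M.D a) (htP : t ∉ M.P) : t ∈ M.D0 a := by
  by_cases ha : a ∈ M.A0
  · obtain ⟨p, q, hp, hq, -, -, hD, hD0⟩ := D_eq_Icc ha
    rw [hD0]
    exact mem_Ioo_of_mem_Icc_of_notMem hp hq (hD ▸ ht) htP
  · obtain ⟨p, -, hD, hD0⟩ := D_eq_singleton ha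
    rwa [hD0, ← hD]

lemma mem_R0_of_mem_R {t : ℝ} (ht : t ∈ M.R a) (htP : t ∉ M.P) : t ∈ M.R0 a := by
  by_cases ha : a ∈ M.A2
  · obtain ⟨w, -, hR, hR0⟩ := R_eq_singleton ha
    rwa [hR0, ← hR]
  · obtain ⟨u, v, hu, hv, -, hR, hR0⟩ := R_eq_Icc ha
    rw [hR0]
    exact mem_Ioo_of_mem_Icc_of_notMem hu hv (hR ▸ ht) htP

lemma D0_subset_D (a : M.A) : M.D0 a ⊆ M.D a := by
  by_cases ha : a ∈ M.A0
  · rw [M.D0_A0 a ha]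
    exact interior_subset
  · obtain ⟨p, -, hD, hD0⟩ := D_eq_singleton ha
    rw [hD, hD0]

lemma R0_subset_R (a : M.A) : M.R0 a ⊆ M.R a := by
  by_cases ha : a ∈ M.A2
  · obtain ⟨w, -, hR, hR0⟩ := R_eq_singleton ha
    rw [hR, hR0]
  · obtain ⟨u, v, -, -, -, hR, hR0⟩ := R_eq_Icc ha
    rw [hR, hR0]
    exact Ioo_subset_Icc_self

lemma R_subset_Icc (a : M.A) : M.R a ⊆ Icc 0 1 := by
  by_cases ha : a ∈ M.A2
  · obtain ⟨w, hw, hR, -⟩ := R_eq_singleton ha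
    simpa [hR] using M.P_sub hw
  · obtain ⟨u, v, hu, hv, -, hR, -⟩ := R_eq_Icc ha
    rw [hR]
    exact Icc_subset_Icc (M.P_sub hu).1 (M.P_sub hv).2

lemma R_nonempty (a : M.A) : (M.R a).Nonempty := by
  by_cases ha : a ∈ M.A2
  · obtain ⟨w, -, hR, -⟩ := R_eq_singleton ha
    exact hR ▸ singleton_nonempty w
  · obtain ⟨u, v, -, -, huv, hR, -⟩ := R_eq_Icc ha
    exact hR ▸ nonempty_Icc.2 huv.le

lemma f_mapsTo_Ioo_and_endpoints (ha : a ∈ M.A0) {p q u v : ℝ} (hpq : p < q)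
    (hD : M.D a = Icc p q) (hR : M.R a = Icc u v) :
    MapsTo (M.f a) (Ioo p q) (Ioo u v) ∧ MapsTo (M.f a) {p, q} {u, v} := by
  have hf := M.f_homeo a ha
  rw [hD, hR] at hf
  exact hf.1.mapsTo_Ioo_of_bijOn_Icc hpq.le hf.2

lemma f_mapsTo_D0 (ha : a ∈ M.A0) : MapsTo (M.f a) (M.D0 a) (M.R0 a) := by
  obtain ⟨p, q, -, -, hpq, -, hD, hD0⟩ := D_eq_Icc ha
  obtain ⟨u, v, -, -, -, hR, hR0⟩ := R_eq_Icc (notMem_A2_of_mem_A0 ha)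
  rw [hD0, hR0]
  exact (f_mapsTo_Ioo_and_endpoints ha hpq hD hR).1

lemma f_mem_P (ha : a ∈ M.A0) {s : ℝ} (hs : s ∈ M.D a) (hsP : s ∈ M.P) : M.f a s ∈ M.P := by
  obtain ⟨p, q, -, -, hpq, hadj, hD, -⟩ := D_eq_Icc ha
  obtain ⟨u, v, hu, hv, -, hR, -⟩ := R_eq_Icc (notMem_A2_of_mem_A0 ha)
  rw [hD] at hs
  have hs' : s ∈ ({p, q} : Set ℝ) := by
    rcases hs.1.eq_or_lt with h | h
    · exact Or.inl h.symm
    · exact Or.inr (hs.2.eq_or_lt.resolve_right fun h' => hadj s hsP ⟨h, h'⟩)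
  rcases (f_mapsTo_Ioo_and_endpoints ha hpq hD hR).2 hs' with h | h <;> rw [h] <;> assumption

lemma Gr_eq_prod (ha : a ∉ M.A0) : M.Gr a = M.D a ×ˢ M.R a :=
  M.Gr_A12 a ((M.A_cover a).resolve_left ha)

lemma G0_eq_prod (ha : a ∉ M.A0) : M.G0 a = M.D0 a ×ˢ M.R0 a := by
  have ha' : a ∈ M.A1 ∪ M.A2 := (M.A_cover a).resolve_left ha
  rw [M.D0_A12 a ha']
  rcases ha' with h | h
  · rw [M.G0_A1 a h]
  · rw [M.G0_A2 a h, M.R0_A2 a h, Gr_eq_prod ha]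

lemma fst_mem_D0 {q : ℝ × ℝ} (hq : q ∈ M.G0 a) : q.1 ∈ M.D0 a := by
  by_cases ha : a ∈ M.A0
  · rw [M.G0_A0 a ha] at hq
    exact hq.1
  · rw [G0_eq_prod ha] at hq
    exact hq.1

lemma snd_mem_R0 {q : ℝ × ℝ} (hq : q ∈ M.G0 a) : q.2 ∈ M.R0 a := by
  by_cases ha : a ∈ M.A0
  · rw [M.G0_A0 a ha] at hq
    exact hq.2 ▸ f_mapsTo_D0 ha hq.1
  · rw [G0_eq_prod ha] at hq
    exact hq.2

lemma G0_subset_Gr (a : M.A) : M.G0 a ⊆ M.Gr a := by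
  by_cases ha : a ∈ M.A0
  · rw [M.G0_A0 a ha, M.Gr_A0 a ha]
    exact fun q hq => ⟨D0_subset_D a hq.1, hq.2⟩
  · rw [G0_eq_prod ha, Gr_eq_prod ha]
    exact prod_mono (D0_subset_D a) (R0_subset_R a)

lemma isClosed_D (a : M.A) : IsClosed (M.D a) := by
  by_cases ha : a ∈ M.A0
  · obtain ⟨p, q, -, -, -, -, hD, -⟩ := D_eq_Icc ha
    exact hD ▸ isClosed_Icc
  · obtain ⟨p, -, hD, -⟩ := D_eq_singleton ha
    exact hD ▸ isClosed_singleton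

lemma isClosed_R (a : M.A) : IsClosed (M.R a) := by
  by_cases ha : a ∈ M.A2
  · obtain ⟨w, -, hR, -⟩ := R_eq_singleton ha
    exact hR ▸ isClosed_singleton
  · obtain ⟨u, v, -, -, -, hR, -⟩ := R_eq_Icc ha
    exact hR ▸ isClosed_Icc

lemma isClosed_Gr (a : M.A) : IsClosed (M.Gr a) := by
  by_cases ha : a ∈ M.A0
  · have h := ((M.f_homeo a ha).1.comp continuousOn_fst (mapsTo_fst_prod (t := univ))).sub
      continuousOn_snd |>.preimage_isClosed_of_isClosed ((isClosed_D a).prod isClosed_univ)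
      (isClosed_singleton (x := (0 : ℝ)))
    convert h using 1
    ext q
    simp only [M.Gr_A0 a ha, mem_ofPred_eq, mem_inter_iff, mem_prod, mem_univ, and_true,
      mem_preimage, mem_singleton_iff, Pi.sub_apply, Function.comp_apply]
    exact and_congr_right fun _ => eq_comm.trans sub_eq_zero.symm
  · rw [Gr_eq_prod ha]
    exact (isClosed_D a).prod (isClosed_R a)

lemma fst_eq_of_mem_Gr {s s' t : ℝ} (h : (s, t) ∈ M.Gr a) (h' : (s', t) ∈ M.Gr a) : s = s' := by
  by_cases ha : a ∈ M.A0
  · rw [M.Gr_A0 a ha] at h h'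
    exact (M.f_homeo a ha).2.injOn h.1 h'.1 (h.2.symm.trans h'.2)
  · obtain ⟨p, -, hD, -⟩ := D_eq_singleton ha
    rw [Gr_eq_prod ha, hD] at h h'
    exact h.1.trans h'.1.symm

lemma mem_G0_of_mem_Gr {q : ℝ × ℝ} (hq : q ∈ M.Gr a) (hP : q.1 ∉ M.P ∨ q.2 ∉ M.P) :
    q ∈ M.G0 a := by
  by_cases ha : a ∈ M.A0
  · rw [M.Gr_A0 a ha] at hq
    have h1 : q.1 ∉ M.P := fun h1 => hP.elim (· h1) fun h2 => h2 (hq.2 ▸ f_mem_P ha hq.1 h1)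
    rw [M.G0_A0 a ha]
    exact ⟨mem_D0_of_mem_D hq.1 h1, hq.2⟩
  · obtain ⟨p, hp, hD, hD0⟩ := D_eq_singleton ha
    rw [Gr_eq_prod ha] at hq
    have h1 : q.1 = p := by simpa [hD] using hq.1
    rw [G0_eq_prod ha, hD0]
    exact ⟨h1, mem_R0_of_mem_R hq.2 (hP.resolve_left (h1 ▸ not_not_intro hp))⟩

lemma notMem_P_of_mem_G0 (ha : a ∉ M.A2) {q : ℝ × ℝ} (hq : q ∈ M.G0 a) :
    q.1 ∉ M.P ∨ q.2 ∉ M.P := by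
  rcases M.A_cover a with h | h | h
  · exact Or.inl (notMem_P_of_mem_D0 h (fst_mem_D0 hq))
  · exact Or.inr (notMem_P_of_mem_R0_of_mem_A1 h (snd_mem_R0 hq))
  · exact absurd h ha

lemma snd_mem_P_of_mem_G0 (ha : a ∈ M.A2) {q : ℝ × ℝ} (hq : q ∈ M.G0 a) : q.2 ∈ M.P := by
  obtain ⟨w, hw, -, hR0⟩ := R_eq_singleton ha
  have h : q.2 ∈ M.R0 a := snd_mem_R0 hq
  rw [hR0] at h
  exact h ▸ hw

lemma eq_of_mem_G0_of_mem_A2 (ha : a ∈ M.A2) {q q' : ℝ × ℝ} (hq : q ∈ M.G0 a)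
    (hq' : q' ∈ M.G0 a) : q = q' := by
  have ha0 : a ∉ M.A0 := fun h => notMem_A2_of_mem_A0 h ha
  obtain ⟨p, -, -, hD0⟩ := D_eq_singleton ha0
  obtain ⟨w, -, -, hR0⟩ := R_eq_singleton ha
  rw [G0_eq_prod ha0, hD0, hR0] at hq hq'
  exact Prod.ext (hq.1.trans hq'.1.symm) (hq.2.trans hq'.2.symm)

lemma fst_eq_of_mem_G0 {q q' : ℝ × ℝ} (hq : q ∈ M.G0 a) (hq' : q' ∈ M.G0 a) (hP : q.1 ∈ M.P) :
    q'.1 = q.1 := by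
  have ha : a ∉ M.A0 := fun ha => notMem_P_of_mem_D0 ha (fst_mem_D0 hq) hP
  obtain ⟨p, -, -, hD0⟩ := D_eq_singleton ha
  have h := fst_mem_D0 hq
  have h' := fst_mem_D0 hq'
  rw [hD0] at h h'
  exact h'.trans h.symm

lemma D0_subset_R0_of_mem_G0 {s t t' : ℝ} (h : (s, t) ∈ M.G0 a) (h' : (t, t') ∈ M.G0 b) :
    M.D0 b ⊆ M.R0 a := by
  by_cases hb : b ∈ M.A0
  · obtain ⟨p, q, -, -, -, hadj, -, hD0⟩ := D_eq_Icc hb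
    have ht : t ∈ Ioo p q := hD0 ▸ fst_mem_D0 h'
    have ha : a ∉ M.A2 := fun ha => notMem_P_of_mem_D0 hb (fst_mem_D0 h') (snd_mem_P_of_mem_G0 ha h)
    obtain ⟨u, v, hu, hv, -, -, hR0⟩ := R_eq_Icc ha
    have ht' : t ∈ Ioo u v := hR0 ▸ snd_mem_R0 h
    rw [hD0, hR0]
    exact Ioo_subset_Ioo (not_lt.1 fun hpu => hadj u hu ⟨hpu, ht'.1.trans ht.2⟩)
      (not_lt.1 fun hvq => hadj v hv ⟨ht.1.trans ht'.2, hvq⟩)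
  · obtain ⟨p, -, -, hD0⟩ := D_eq_singleton hb
    have ht : t = p := by simpa [hD0] using fst_mem_D0 h'
    rw [hD0, ← ht, singleton_subset_iff]
    exact snd_mem_R0 h

lemma eventually_mem_Gr_imp (q : ℝ × ℝ) : ∀ᶠ q' in 𝓝 q, ∀ a, q' ∈ M.Gr a → q ∈ M.Gr a := by
  have := M.finA
  refine eventually_all.2 fun a => ?_
  by_cases hq : q ∈ M.Gr a
  · exact .of_forall fun _ _ => hq
  · filter_upwards [(isClosed_Gr a).isOpen_compl.mem_nhds hq] with q' hq' h using absurd h hq'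

lemma eventually_eq_of_mem_P (p : ℝ) : ∀ᶠ t in 𝓝 p, t ∈ M.P → t = p := by
  have hclosed : IsClosed ((M.P : Set ℝ) \ {p}) := (M.P.finite_toSet.sdiff (t := {p})).isClosed
  filter_upwards [hclosed.isOpen_compl.mem_nhds (by simp)] with t ht htP
  exact by_contra fun hne => ht ⟨htP, hne⟩

lemma exists_mem_G0 (hpp : M.ProperlyParametrized) {q : ℝ × ℝ} (hq : q ∈ M.GF) :
    ∃ a, q ∈ M.G0 a :=
  mem_iUnion.1 (hpp.1 ▸ hq)

lemma eq_of_mem_G0 (hpp : M.ProperlyParametrized) {q : ℝ × ℝ} (ha : q ∈ M.G0 a)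
    (hb : q ∈ M.G0 b) : a = b :=
  by_contra fun hab => disjoint_left.1 (hpp.2 a b hab) ha hb

lemma eventually_mem_G0 (hpp : M.ProperlyParametrized) {q : ℝ × ℝ} (hq : q ∈ M.G0 a)
    (hP : q.1 ∉ M.P ∨ q.2 ∉ M.P) : ∀ᶠ q' in 𝓝 q, q' ∈ M.GF → q' ∈ M.G0 a := by
  filter_upwards [eventually_mem_Gr_imp q] with q' hnear hq'
  obtain ⟨c, hc⟩ := exists_mem_G0 hpp hq'
  rwa [eq_of_mem_G0 hpp (mem_G0_of_mem_Gr (hnear c (G0_subset_Gr c hc)) hP) hq] at hc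

lemma exists_mem_GF {t : ℝ} (ht : t ∈ Icc 0 1) : ∃ t' ∈ Icc (0 : ℝ) 1, (t, t') ∈ M.GF := by
  obtain ⟨a, ha⟩ := mem_iUnion.1 (M.cover ▸ ht)
  suffices ∃ t' ∈ M.R a, (t, t') ∈ M.Gr a from
    this.imp fun t' h => ⟨R_subset_Icc a h.1, mem_iUnion.2 ⟨a, h.2⟩⟩
  by_cases ha0 : a ∈ M.A0
  · exact ⟨M.f a t, (M.f_homeo a ha0).2.mapsTo ha, by rw [M.Gr_A0 a ha0]; exact ⟨ha, rfl⟩⟩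
  · obtain ⟨t', ht'⟩ := R_nonempty a
    exact ⟨t', ht', Gr_eq_prod ha0 ▸ ⟨ha, ht'⟩⟩

lemma mem_finTraj_of_mem_X {x : ℕ → ℝ} (hx : x ∈ M.X) (n : ℕ) :
    (fun i : Fin n => x i) ∈ M.finTraj n :=
  ⟨fun i => hx.1 i, fun i _ => hx.2 i⟩

lemma mem_GF_of_mem_finTraj {n : ℕ} {y : Fin (n + 1) → ℝ} (hy : y ∈ M.finTraj (n + 1))
    (i : Fin n) : (y i.castSucc, y i.succ) ∈ M.GF :=
  hy.2 i.castSucc (by simp)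

lemma exists_mem_X_of_mem_finTraj {n : ℕ} {y : Fin (n + 1) → ℝ} (hy : y ∈ M.finTraj (n + 1)) :
    ∃ z ∈ M.X, ∀ i : Fin (n + 1), z i = y i := by
  choose! g hg using fun t (ht : t ∈ Icc (0 : ℝ) 1) => exists_mem_GF (M := M) ht
  have hmaps : MapsTo g (Icc 0 1) (Icc 0 1) := fun t ht => (hg t ht).1
  refine ⟨fun k => g^[k - n] (y ⟨min k n, by omega⟩), ⟨fun k => ?_, fun k => ?_⟩, fun i => ?_⟩
  · exact hmaps.iterate _ (hy.1 _)
  · rcases lt_or_ge k n with hk | hk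
    · simpa [Nat.sub_eq_zero_of_le hk.le, Nat.sub_eq_zero_of_le (Nat.succ_le_of_lt hk),
        min_eq_left hk.le, min_eq_left (Nat.succ_le_of_lt hk)]
        using hy.2 ⟨k, by omega⟩ (by simp; omega)
    · have hk' : k + 1 - n = (k - n) + 1 := by omega
      simp only [hk', Function.iterate_succ_apply', min_eq_right hk,
        min_eq_right (hk.trans k.le_succ)]
      exact (hg _ (hmaps.iterate _ (hy.1 _))).2
  · simp [Nat.sub_eq_zero_of_le (Nat.lt_succ_iff.1 i.2), min_eq_left (Nat.lt_succ_iff.1 i.2)]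

lemma mem_SFT_of_forall_mem_G0 {x : ℕ → ℝ} {b : ℕ → M.A}
    (hb : ∀ k, (x k, x (k + 1)) ∈ M.G0 (b k)) : b ∈ M.SFT :=
  fun k => D0_subset_R0_of_mem_G0 (hb k) (hb (k + 1))

lemma exists_specialLabeled (hpp : M.ProperlyParametrized) {n : ℕ} {y : Fin (n + 1) → ℝ}
    (hy : y ∈ M.finTraj (n + 1)) : ∃ u : Fin n → M.A, M.SpecialLabeled y u := by
  choose u hu using fun i => exists_mem_G0 hpp (mem_GF_of_mem_finTraj hy i)
  exact ⟨u, hu⟩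

lemma mem_Lang_of_specialLabeled (hpp : M.ProperlyParametrized) {n : ℕ}
    {y : Fin (n + 1) → ℝ} {u : Fin n → M.A} (hy : y ∈ M.finTraj (n + 1))
    (hu : M.SpecialLabeled y u) : u ∈ M.Lang n := by
  obtain ⟨z, hz, hzy⟩ := exists_mem_X_of_mem_finTraj hy
  choose b hb using fun k => exists_mem_G0 hpp (hz.2 k)
  refine ⟨b, mem_SFT_of_forall_mem_G0 hb, 0, fun i => ?_⟩
  rw [zero_add]
  have h : (z i.castSucc, z i.succ) ∈ M.G0 (b i) := hb i
  rw [hzy, hzy] at h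
  exact eq_of_mem_G0 hpp (hu i) h

lemma D0_subset_R0_of_mem_Lang {n : ℕ} {u : Fin n → M.A} (hu : u ∈ M.Lang n) (i : Fin n)
    (h : (i : ℕ) + 1 < n) : M.D0 (u ⟨i + 1, h⟩) ⊆ M.R0 (u i) := by
  obtain ⟨z, hz, m, hzu⟩ := hu
  rw [hzu, hzu]
  exact hz (m + i)

lemma eq_of_mem_Gr_of_last_eq {n : ℕ} {y y' : Fin (n + 1) → ℝ}
    (h : ∀ i : Fin n, ∃ a, (y' i.castSucc, y' i.succ) ∈ M.Gr a ∧ (y i.castSucc, y i.succ) ∈ M.Gr a)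
    (hlast : y' (Fin.last n) = y (Fin.last n)) : y' = y := by
  funext j
  induction j using Fin.reverseInduction with
  | last => exact hlast
  | cast i ih =>
    obtain ⟨a, h', h⟩ := h i
    rw [ih] at h'
    exact fst_eq_of_mem_Gr h' h

lemma specialLabeled_of_forall_mem_Gr_imp {n : ℕ} {u : Fin n → M.A} {y y' : Fin (n + 1) → ℝ}
    (hy : M.SpecialLabeled y u) (hy' : ∀ i : Fin n, (y' i.castSucc, y' i.succ) ∈ M.GF)
    (hlast : ∀ i : Fin n, u i ∈ M.A2 → (i : ℕ) + 1 < n)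
    (hnear : ∀ (i : Fin n) a,
      (y' i.castSucc, y' i.succ) ∈ M.Gr a → (y i.castSucc, y i.succ) ∈ M.Gr a)
    (hrigid : ∀ i : Fin n, u i ∉ M.A2 → (y' i.castSucc, y' i.succ) ∈ M.G0 (u i)) :
    M.SpecialLabeled y' u := by
  have hback (i : Fin n) (h : y' i.succ = y i.succ) : y' i.castSucc = y i.castSucc := by
    obtain ⟨a, ha⟩ := mem_iUnion.1 (hy' i)
    have ha' := hnear i a ha
    rw [h] at ha
    exact fst_eq_of_mem_Gr ha ha'
  have hpin (i : Fin n) : u i ∈ M.A2 → y' i.succ = y i.succ := by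
    induction i using WellFoundedGT.induction with
    | _ i ih =>
      intro hi
      let j : Fin n := ⟨i + 1, hlast i hi⟩
      have hj : j.castSucc = i.succ := rfl
      rw [← hj]
      by_cases hj2 : u j ∈ M.A2
      · exact hback j (ih j (Nat.lt_succ_self _) hj2)
      · exact fst_eq_of_mem_G0 (hy j) (hrigid j hj2) (snd_mem_P_of_mem_G0 hi (hy i))
  intro i
  by_cases hi : u i ∈ M.A2
  · have h := hpin i hi
    rw [show (y' i.castSucc, y' i.succ) = (y i.castSucc, y i.succ) from Prod.ext (hback i h) h]
    exact hy i
  · exact hrigid i hi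

theorem essentialWord_of_forall_A2_lt (hpp : M.ProperlyParametrized) {n : ℕ} {u : Fin n → M.A}
    (hu : u ∈ M.Lang n) (hlast : ∀ i : Fin n, u i ∈ M.A2 → (i : ℕ) + 1 < n) :
    M.EssentialWord u := by
  refine ⟨hu, isOpen_iff_mem_nhds.2 fun y (hy : M.SpecialLabeled y.1 u) => ?_⟩
  have hnear := eventually_forall_pairs (X := ℝ) (n := n) fun i =>
    eventually_mem_Gr_imp (M := M) (y.1 i.castSucc, y.1 i.succ)
  have hrigid : ∀ᶠ y' in 𝓝 y.1, ∀ i, u i ∉ M.A2 → (y' i.castSucc, y' i.succ) ∈ M.GF →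
      (y' i.castSucc, y' i.succ) ∈ M.G0 (u i) := by
    refine eventually_forall_pairs (Q := fun i q => u i ∉ M.A2 → q ∈ M.GF → q ∈ M.G0 (u i))
      fun i => ?_
    by_cases hi : u i ∈ M.A2
    · exact .of_forall fun _ h => absurd hi h
    · filter_upwards [eventually_mem_G0 hpp (hy i) (notMem_P_of_mem_G0 hi (hy i))]
        with q hq _ using hq
  filter_upwards [(continuous_subtype_val.tendsto y).eventually (hnear.and hrigid)]
    with y' ⟨h1, h2⟩
  have hGF := mem_GF_of_mem_finTraj y'.2
  exact specialLabeled_of_forall_mem_Gr_imp hy hGF hlast h1 fun i hi => h2 i hi (hGF i)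

lemma subsingleton_setOf_specialLabeled {n : ℕ} {w : Fin n → M.A} {i : Fin n} (hi : w i ∈ M.A2)
    (hlast : i.succ = Fin.last n) : {z : Fin (n + 1) → ℝ | M.SpecialLabeled z w}.Subsingleton := by
  intro z hz y hy
  refine eq_of_mem_Gr_of_last_eq (fun j => ⟨w j, G0_subset_Gr _ (hz j), G0_subset_Gr _ (hy j)⟩) ?_
  rw [← hlast]
  exact congrArg Prod.snd (eq_of_mem_G0_of_mem_A2 hi (hz i) (hy i))

theorem exists_essentialWord_labeled_of_not_isOpen (hpp : M.ProperlyParametrized) {n : ℕ}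
    {y : Fin (n + 1) → ℝ} (hy : y ∈ M.finTraj (n + 1))
    (hiso : ¬IsOpen ({⟨y, hy⟩} : Set (M.finTraj (n + 1)))) :
    ∃ v : Fin n → M.A, M.EssentialWord v ∧ M.Labeled y v := by
  rw [isOpen_singleton_iff_punctured_nhds] at hiso
  have : (𝓝[≠] (⟨y, hy⟩ : M.finTraj (n + 1))).NeBot := ⟨hiso⟩
  have hnear := eventually_forall_pairs (X := ℝ) (n := n) fun i =>
    eventually_mem_Gr_imp (M := M) (y i.castSucc, y i.succ)
  have hP := ((continuous_apply (Fin.last n)).tendsto y).eventually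
    (eventually_eq_of_mem_P (M := M) (y (Fin.last n)))
  obtain ⟨⟨y', hy'⟩, hne, hnear', hP'⟩ := ((eventually_mem_nhdsWithin (s := {⟨y, hy⟩}ᶜ)).and
    (((continuous_subtype_val.tendsto (⟨y, hy⟩ : M.finTraj (n + 1))).eventually
      (hnear.and hP)).filter_mono nhdsWithin_le_nhds)).exists
  have hGF := mem_GF_of_mem_finTraj hy'
  have hlast : y' (Fin.last n) ∉ M.P := fun h => hne (Subtype.ext (eq_of_mem_Gr_of_last_eq
    (fun j => (mem_iUnion.1 (hGF j)).imp fun a ha => ⟨ha, hnear' j a ha⟩) (hP' h)))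
  obtain ⟨v, hv⟩ := exists_specialLabeled hpp hy'
  refine ⟨v, essentialWord_of_forall_A2_lt hpp (mem_Lang_of_specialLabeled hpp hy' hv)
    fun j hj => ?_, fun j => hnear' j _ (G0_subset_Gr _ (hv j))⟩
  by_contra hjn
  have hjlast : j.succ = Fin.last n := Fin.ext (by simp; omega)
  exact hlast (by simpa [hjlast] using snd_mem_P_of_mem_G0 hj (hv j))

theorem exists_essentialWord_labeled (hpp : M.ProperlyParametrized) {n : ℕ}
    {y : Fin (n + 1) → ℝ} (hy : y ∈ M.finTraj (n + 1)) :
    ∃ v : Fin n → M.A, M.EssentialWord v ∧ M.Labeled y v := by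
  by_cases hiso : IsOpen ({⟨y, hy⟩} : Set (M.finTraj (n + 1)))
  swap
  · exact exists_essentialWord_labeled_of_not_isOpen hpp hy hiso
  obtain ⟨w, hw⟩ := exists_specialLabeled hpp hy
  have hwL := mem_Lang_of_specialLabeled hpp hy hw
  refine ⟨w, ?_, fun i => G0_subset_Gr _ (hw i)⟩
  by_cases hlast : ∀ i : Fin n, w i ∈ M.A2 → (i : ℕ) + 1 < n
  · exact essentialWord_of_forall_A2_lt hpp hwL hlast
  push Not at hlast
  obtain ⟨i, hi, hin⟩ := hlast
  have hsub := subsingleton_setOf_specialLabeled hi (Fin.ext (by simp; omega))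
  refine ⟨hwL, ?_⟩
  convert hiso
  ext z
  exact ⟨fun hz => Subtype.ext (hsub hz hw), by rintro rfl; exact hw⟩

theorem exists_mem_E_of_forall_essentialWord_labeled {x : ℕ → ℝ}
    (h : ∀ n, ∃ v : Fin n → M.A, M.EssentialWord v ∧ M.Labeled (fun i : Fin (n + 1) => x i) v) :
    ∃ a ∈ M.E, ∀ i, (x i, x (i + 1)) ∈ M.Gr (a i) := by
  choose v hv using h
  have := M.finA
  have : Nonempty M.A := ⟨v 1 0⟩
  obtain ⟨a, ha⟩ := exists_forall_exists_eqOn_of_finite fun n i =>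
    if hi : i < n then v n ⟨i, hi⟩ else Classical.arbitrary M.A
  have key (i : ℕ) :
      ∃ n, ∃ hn : i + 1 < n, a i = v n ⟨i, by omega⟩ ∧ a (i + 1) = v n ⟨i + 1, hn⟩ := by
    obtain ⟨n, hn, hagree⟩ := ha (i + 2)
    refine ⟨n, by omega, ?_, ?_⟩
    · rw [hagree i (by omega), dif_pos]
    · rw [hagree (i + 1) (by omega), dif_pos]
  refine ⟨a, ⟨fun i => ?_, fun i => ?_⟩, fun i => ?_⟩ <;> obtain ⟨n, hn, h0, h1⟩ := key i
  · rw [h0, h1]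
    exact D0_subset_R0_of_mem_Lang (hv n).1.1 ⟨i, by omega⟩ hn
  · exact ⟨n, v n, (hv n).1, ⟨i, by omega⟩, h0.symm⟩
  · rw [h0]
    exact (hv n).2 ⟨i, by omega⟩

end MarkovMultiMap

/-- Every forward trajectory can be coded by an essential symbolic sequence. -/
theorem stmt7 (M : MarkovMultiMap) (hpp : M.ProperlyParametrized)
    (x : ℕ → ℝ) (hx : x ∈ M.X) :
    ∃ a ∈ M.E, ∀ i : ℕ, (x i, x (i + 1)) ∈ M.Gr (a i) :=
  M.exists_mem_E_of_forall_essentialWord_labeled fun _ =>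
    MarkovMultiMap.exists_essentialWord_labeled hpp (MarkovMultiMap.mem_finTraj_of_mem_X hx _)
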